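/- Let f be a real-valued function on the space of m×n real matrices equipped with the Frobenius inner product ⟪A, B⟫_F = tr(AᵀB), such that f has gradient ∇f(W) at every W and ∇f is Lipschitz with constant L > 0 in the Frobenius norm. Assume the μ-Polyak–Łojasiewicz condition: there are μ > 0 and f⋆ ∈ ℝ with f⋆ ≤ f(W) and ‖∇f(W)‖_F² ≥ 2μ(f(W) − f⋆) for all W. Let W be an m×n real matrix with G := ∇f(W) such that GᵀG is positive definite, let S be the unique symmetric positive semidefinite square root of GᵀG, and set N := tr(S). Then for every γ with 0 < γ < 2/(L n), f(W − γ N G S⁻¹) − f⋆ ≤ (1 − 2μγ(1 − (Lγ/2) n)) · (f(W) − f⋆). -/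

import Mathlib

/-!
The descent lemma for an `L`-smooth `f` gives `f(W - tQ) ≤ f(W) - t⟪G, Q⟫ + (L t²/2)‖Q‖²`.
For the polar factor `Q = G S⁻¹` one has `GᵀQ = S` and `QᵀQ = 1`, so `⟪G, Q⟫ = tr S = N` and
`‖Q‖² = n`; with `t = γN` the step decreases `f` by `γ(1 - Lγn/2)N²`. Since `tr(S²) ≤ (tr S)²`
for `S ⪰ 0`, `N² ≥ ‖G‖²`, and the PL inequality turns this decrease into the contraction factor.
-/

open Matrix
open scoped RealInnerProductSpace

noncomputable section

/-- The Frobenius inner product `⟪A, B⟫_F = tr(AᵀB)` on `m×n` real matrices,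
packaged as an `InnerProductSpace.Core`. -/
def frobeniusCore (m n : ℕ) :
    InnerProductSpace.Core ℝ (Matrix (Fin m) (Fin n) ℝ) where
  inner A B := (Aᵀ * B).trace
  conj_inner_symm := by
    intro x y
    have h : (yᵀ * x).trace = (xᵀ * y).trace := by
      rw [← Matrix.trace_transpose (yᵀ * x), Matrix.transpose_mul,
        Matrix.transpose_transpose]
    simpa using h
  re_inner_nonneg := by
    intro x
    have h : (xᵀ * x).trace = ∑ j, ∑ i, x i j * x i j := by
      simp [Matrix.trace, Matrix.diag, Matrix.mul_apply]
    have h' : (0 : ℝ) ≤ (xᵀ * x).trace := by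
      rw [h]
      exact Finset.sum_nonneg fun j _ => Finset.sum_nonneg fun i _ => mul_self_nonneg _
    simpa using h'
  add_left := by
    intro x y z
    simp [Matrix.transpose_add, Matrix.add_mul]
  smul_left := by
    intro x y r
    simp [Matrix.transpose_smul, Matrix.smul_mul]
  definite := by
    intro x hx
    have h : ∑ j, ∑ i, x i j * x i j = 0 := by
      have h' : (xᵀ * x).trace = ∑ j, ∑ i, x i j * x i j := by
        simp [Matrix.trace, Matrix.diag, Matrix.mul_apply]
      rw [← h']
      simpa using hx
    ext i j
    have hj : ∀ j' ∈ Finset.univ, (0 : ℝ) ≤ ∑ i', x i' j' * x i' j' :=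
      fun j' _ => Finset.sum_nonneg fun i' _ => mul_self_nonneg _
    have h3 : ∑ i', x i' j * x i' j = 0 :=
      (Finset.sum_eq_zero_iff_of_nonneg hj).mp h j (Finset.mem_univ j)
    have h4 : x i j * x i j = 0 :=
      (Finset.sum_eq_zero_iff_of_nonneg fun i' _ => mul_self_nonneg _).mp h3 i
        (Finset.mem_univ i)
    simpa using mul_self_eq_zero.mp h4

/-- `m×n` real matrices as a normed group under the Frobenius norm. -/
instance (m n : ℕ) : NormedAddCommGroup (Matrix (Fin m) (Fin n) ℝ) :=
  (frobeniusCore m n).toNormedAddCommGroup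

/-- `m×n` real matrices with the Frobenius inner product. -/
instance (m n : ℕ) : InnerProductSpace ℝ (Matrix (Fin m) (Fin n) ℝ) :=
  InnerProductSpace.ofCore (frobeniusCore m n).toCore

instance (m n : ℕ) : CompleteSpace (Matrix (Fin m) (Fin n) ℝ) :=
  FiniteDimensional.complete ℝ _

section DescentLemma

variable {E : Type*} [NormedAddCommGroup E] [InnerProductSpace ℝ E] [CompleteSpace E]

theorem le_add_inner_add_of_lipschitz_gradient {f : E → ℝ} {f' : E → E} {L : ℝ}
    (hf : ∀ x, HasGradientAt f (f' x) x) (hf' : ∀ x y, ‖f' x - f' y‖ ≤ L * ‖x - y‖)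
    (x y : E) :
    f y ≤ f x + ⟪f' x, y - x⟫ + L / 2 * ‖y - x‖ ^ 2 := by
  set d := y - x
  set g : ℝ → ℝ := fun t ↦ f (x + t • d) - t * ⟪f' x, d⟫ - L / 2 * t ^ 2 * ‖d‖ ^ 2
  have hg (t : ℝ) : HasDerivAt g (⟪f' (x + t • d) - f' x, d⟫ - L * t * ‖d‖ ^ 2) t := by
    have hline : HasDerivAt (fun t : ℝ ↦ x + t • d) d t := by
      simpa using ((hasDerivAt_id t).smul_const d).const_add x
    have hf_line := (hf (x + t • d)).hasFDerivAt.comp_hasDerivAt t hline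
    simp only [InnerProductSpace.toDual_apply_apply] at hf_line
    refine ((hf_line.sub ((hasDerivAt_id t).mul_const _)).sub
      (((hasDerivAt_pow 2 t).const_mul (L / 2)).mul_const _)).congr_deriv ?_
    simp only [inner_sub_left, Nat.cast_ofNat, Nat.add_one_sub_one, pow_one, one_mul]
    ring
  have hg_nonpos : ∀ t ∈ interior (Set.Icc (0 : ℝ) 1), deriv g t ≤ 0 := by
    intro t ht
    rw [interior_Icc] at ht
    have hstep : ‖f' (x + t • d) - f' x‖ ≤ L * (t * ‖d‖) := by
      simpa [norm_smul, abs_of_pos ht.1] using hf' (x + t • d) x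
    rw [(hg t).deriv, sub_nonpos]
    calc ⟪f' (x + t • d) - f' x, d⟫ ≤ ‖f' (x + t • d) - f' x‖ * ‖d‖ := real_inner_le_norm _ _
      _ ≤ L * (t * ‖d‖) * ‖d‖ := by gcongr
      _ = L * t * ‖d‖ ^ 2 := by ring
  have hanti : AntitoneOn g (Set.Icc 0 1) :=
    antitoneOn_of_deriv_nonpos (convex_Icc 0 1)
      (fun t _ ↦ (hg t).continuousAt.continuousWithinAt)
      (fun t _ ↦ (hg t).differentiableAt.differentiableWithinAt) hg_nonpos
  have h01 := hanti (Set.left_mem_Icc.2 zero_le_one) (Set.right_mem_Icc.2 zero_le_one) zero_le_one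
  simp only [g, one_smul, zero_smul, add_zero, add_sub_cancel, d] at h01
  linarith

end DescentLemma

theorem Matrix.IsHermitian.trace_pow_eq_sum_eigenvalues_pow {𝕜 n : Type*} [RCLike 𝕜]
    [Fintype n] [DecidableEq n] {S : Matrix n n 𝕜} (hS : S.IsHermitian) (k : ℕ) :
    (S ^ k).trace = ∑ i, (hS.eigenvalues i : 𝕜) ^ k := by
  conv_lhs => rw [hS.spectral_theorem, ← map_pow, Unitary.conjStarAlgAut_apply, trace_mul_cycle,
    Unitary.coe_star_mul_self, one_mul, diagonal_pow, trace_diagonal]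
  rfl

theorem Matrix.PosSemidef.trace_mul_self_le_sq_trace {n : Type*} [Fintype n] [DecidableEq n]
    {S : Matrix n n ℝ} (hS : S.PosSemidef) : (S * S).trace ≤ S.trace ^ 2 := by
  have h₁ := hS.1.trace_pow_eq_sum_eigenvalues_pow 1
  rw [pow_one] at h₁
  rw [← sq, hS.1.trace_pow_eq_sum_eigenvalues_pow 2, h₁]
  simpa using Finset.sum_sq_le_sq_sum_of_nonneg fun i _ ↦ hS.eigenvalues_nonneg i

section PolarFactor

variable {R m n : Type*} [CommRing R] [Fintype m] [Fintype n] [DecidableEq n]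
  {G : Matrix m n R} {S : Matrix n n R}

theorem transpose_mul_mul_inv_of_mul_self_eq (hS : IsUnit S.det) (hSG : S * S = Gᵀ * G) :
    Gᵀ * (G * S⁻¹) = S := by
  rw [← Matrix.mul_assoc, ← hSG, Matrix.mul_assoc, mul_nonsing_inv S hS, Matrix.mul_one]

theorem transpose_mul_self_eq_one_of_mul_self_eq (hS : IsUnit S.det) (hSG : S * S = Gᵀ * G)
    (hSt : Sᵀ = S) : (G * S⁻¹)ᵀ * (G * S⁻¹) = 1 := by
  rw [transpose_mul, transpose_nonsing_inv, hSt, Matrix.mul_assoc,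
    transpose_mul_mul_inv_of_mul_self_eq hS hSG, nonsing_inv_mul S hS]

end PolarFactor

theorem frobenius_inner_eq_trace {m n : ℕ} (A B : Matrix (Fin m) (Fin n) ℝ) :
    ⟪A, B⟫ = (Aᵀ * B).trace :=
  rfl

theorem frobenius_norm_sq_eq_trace {m n : ℕ} (A : Matrix (Fin m) (Fin n) ℝ) :
    ‖A‖ ^ 2 = (Aᵀ * A).trace := by
  rw [← real_inner_self_eq_norm_sq, frobenius_inner_eq_trace]

theorem linear_convergence_PL_nuclear_scaled_polargrad_general
    {m n : ℕ} (f : Matrix (Fin m) (Fin n) ℝ → ℝ)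
    (gradf : Matrix (Fin m) (Fin n) ℝ → Matrix (Fin m) (Fin n) ℝ)
    (L : ℝ)
    (hgrad : ∀ W, HasGradientAt f (gradf W) W)
    (hlip : ∀ X Y, ‖gradf X - gradf Y‖ ≤ L * ‖X - Y‖)
    (μ : ℝ) (fstar : ℝ)
    (hPL : ∀ X, ‖gradf X‖ ^ 2 ≥ 2 * μ * (f X - fstar))
    (W G : Matrix (Fin m) (Fin n) ℝ) (hG : G = gradf W)
    (hpd : (Gᵀ * G).PosDef)
    (S : Matrix (Fin n) (Fin n) ℝ) (hS : S.PosSemidef) (hSsq : S * S = Gᵀ * G)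
    (N : ℝ) (hN : N = S.trace) :
    ∀ γ : ℝ, 0 < γ → γ < 2 / (L * (n : ℝ)) →
      f (W - (γ * N) • (G * S⁻¹)) - fstar ≤
        (1 - 2 * μ * γ * (1 - L * γ / 2 * (n : ℝ))) * (f W - fstar) := by
  intro γ hγ hγL
  have hLn : 0 < L * n := by
    by_contra! h
    exact (hγ.trans hγL).not_ge (div_nonpos_of_nonneg_of_nonpos zero_le_two h)
  have hstep : 0 < 1 - L * γ / 2 * n := by
    rw [lt_div_iff₀ hLn] at hγL
    linarith
  have hdet : IsUnit S.det := by
    refine isUnit_of_mul_isUnit_left (y := S.det) ?_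
    rw [← det_mul, hSsq, ← isUnit_iff_isUnit_det]
    exact hpd.isUnit
  have hinner : ⟪G, G * S⁻¹⟫ = N := by
    rw [frobenius_inner_eq_trace, transpose_mul_mul_inv_of_mul_self_eq hdet hSsq, hN]
  have hnorm : ‖G * S⁻¹‖ ^ 2 = n := by
    rw [frobenius_norm_sq_eq_trace, transpose_mul_self_eq_one_of_mul_self_eq hdet hSsq hS.1,
      trace_one, Fintype.card_fin]
  have hdescent := le_add_inner_add_of_lipschitz_gradient hgrad hlip W (W - (γ * N) • (G * S⁻¹))
  rw [sub_sub_cancel_left, inner_neg_right, real_inner_smul_right, norm_neg, norm_smul, mul_pow,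
    ← hG, hinner, hnorm, Real.norm_eq_abs, sq_abs] at hdescent
  have hGN : ‖G‖ ^ 2 ≤ N ^ 2 := by
    rw [frobenius_norm_sq_eq_trace, ← hSsq, hN]
    exact hS.trace_mul_self_le_sq_trace
  have hPLN : 2 * μ * (f W - fstar) ≤ N ^ 2 := (hG ▸ hPL W).trans hGN
  calc f (W - (γ * N) • (G * S⁻¹)) - fstar
      ≤ f W - fstar - γ * (1 - L * γ / 2 * n) * N ^ 2 := by linarith
    _ ≤ (1 - 2 * μ * γ * (1 - L * γ / 2 * n)) * (f W - fstar) := by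
      linarith [mul_le_mul_of_nonneg_left hPLN (mul_pos hγ hstep).le]

/-- Linear convergence of the nuclear-norm-scaled polar update
under the Polyak–Łojasiewicz condition: if `f` has an `L`-Lipschitz Frobenius
gradient, satisfies the `μ`-PL inequality relative to a lower bound `f⋆`,
`G = ∇f(W)` has `GᵀG` positive definite with unique symmetric psd square root
`S`, and `N = tr S`, then for every step size `0 < γ < 2/(Ln)`,
`f(W − γ N G S⁻¹) − f⋆ ≤ (1 − 2μγ(1 − (Lγ/2)n))(f(W) − f⋆)`. -/
theorem linear_convergence_PL_nuclear_scaled_polargrad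
    {m n : ℕ} (f : Matrix (Fin m) (Fin n) ℝ → ℝ)
    (gradf : Matrix (Fin m) (Fin n) ℝ → Matrix (Fin m) (Fin n) ℝ)
    (L : ℝ) (hL : 0 < L)
    (hgrad : ∀ W, HasGradientAt f (gradf W) W)
    (hlip : ∀ X Y, ‖gradf X - gradf Y‖ ≤ L * ‖X - Y‖)
    (μ : ℝ) (hμ : 0 < μ) (fstar : ℝ) (hfstar : ∀ X, fstar ≤ f X)
    (hPL : ∀ X, ‖gradf X‖ ^ 2 ≥ 2 * μ * (f X - fstar))
    (W G : Matrix (Fin m) (Fin n) ℝ) (hG : G = gradf W)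
    (hpd : (Gᵀ * G).PosDef)
    (S : Matrix (Fin n) (Fin n) ℝ) (hS : S.PosSemidef) (hSsq : S * S = Gᵀ * G)
    (N : ℝ) (hN : N = S.trace) :
    ∀ γ : ℝ, 0 < γ → γ < 2 / (L * (n : ℝ)) →
      f (W - (γ * N) • (G * S⁻¹)) - fstar ≤
        (1 - 2 * μ * γ * (1 - L * γ / 2 * (n : ℝ))) * (f W - fstar) :=
  linear_convergence_PL_nuclear_scaled_polargrad_general f gradf L hgrad hlip μ fstar hPL W G hG hpd
    S hS hSsq N hN

end
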